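/- For the Taft algebra (n = 1) and its two-dimensional simple D(T_ℓ)-module 𝒜̄_{(i-1)ε₁, iε₁} with basis {K(iε₁), x₁K((i-1)ε₁)}, the braiding R-matrix (the composition of the flip with the action of the canonical R-matrix of the double) is given in this basis by the 4×4 matrix with rows (q^{i(i-1)},0,0,0), (0, q^{i(i-1)}(1-q), q^{i²}, 0), (0, q^{(i-1)²}, 0, 0), (0,0,0, q^{i(i-1)}); in particular for ℓ odd and i = (ℓ+1)/2 its minimal polynomial is (x - q^{-1/4})(x + q^{3/4}) where q^{1/4} := q^{(ℓ+1)²/4}. -/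

import Mathlib

open scoped TensorProduct

def starForm {n : ℕ} (α β : Fin n → ℤ) : ℤ :=
  ∑ j : Fin n, ∑ i : Fin n, if (j : ℕ) < (i : ℕ) then α i * β j else 0

noncomputable def theta {k : Type*} [Field k] (q : k) {n : ℕ} (α β : Fin n → ℤ) : k :=
  q ^ (starForm α β - starForm β α)

def epsZ {n : ℕ} (i : Fin n) : Fin n → ℤ := fun j => if j = i then 1 else 0

/-- The ordered monomial `x^γ = x_1^{γ_1} ⋯ x_n^{γ_n}` built from a family `x`. -/
def xpow {A : Type*} [Ring A] {n : ℕ} (x : Fin n → A) (γ : Fin n → ℕ) : A :=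
  ((List.finRange n).map (fun i => x i ^ γ i)).prod

/-- A presentation of the `n`-rank Taft algebra inside a Hopf algebra `A`
(generators `K(α)`, `x_i` and the defining relations, together with the values of
the comultiplication, counit and antipode on the generators).  The scalar `t`
is the parameter used in the skew bicharacter `θ`: for the `n`-rank Taft algebra
`𝒜̄_q(n)` one takes `t = q`, while `t = 1` gives the presentation of the `n`-fold
tensor power of the Taft algebra (the rank-`n` Taft algebra `𝒜̄_q(1)^{⊗n}`). -/
structure TaftPresentation (k : Type*) [Field k] (A : Type*) [Ring A]
    [HopfAlgebra k A] (n ℓ : ℕ) (q t : k) where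
  K : (Fin n → ℤ) → A
  x : Fin n → A
  K_zero : K 0 = 1
  K_add : ∀ α β, K α * K β = K (α + β)
  K_ell : ∀ i, K (epsZ i) ^ ℓ = 1
  K_x : ∀ i j, K (epsZ i) * x j
      = (theta t (epsZ i) (epsZ j) * if i = j then q else 1) • (x j * K (epsZ i))
  x_x : ∀ i j, x i * x j = theta t (epsZ i) (epsZ j) • (x j * x i)
  x_ell : ∀ i, x i ^ ℓ = 0
  comul_K : ∀ α, Coalgebra.comul (R := k) (K α) = K α ⊗ₜ[k] K α
  comul_x : ∀ i, Coalgebra.comul (R := k) (x i) = x i ⊗ₜ[k] 1 + K (epsZ i) ⊗ₜ[k] x i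
  counit_K : ∀ α, Coalgebra.counit (R := k) (K α) = 1
  counit_x : ∀ i, Coalgebra.counit (R := k) (x i) = 0
  antipode_K : ∀ α, HopfAlgebra.antipode (R := k) (K α) = K (-α)
  antipode_x : ∀ i, HopfAlgebra.antipode (R := k) (x i) = -(K (-epsZ i) * x i)

namespace TaftPresentation

variable {k : Type*} [Field k] {A : Type*} [Ring A] [HopfAlgebra k A]
  {n ℓ : ℕ} {q t : k}

/-- The basis monomial `x^γ K(α)`. -/
def mono (T : TaftPresentation k A n ℓ q t) (γ α : Fin n → Fin ℓ) : A :=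
  xpow T.x (fun i => (γ i : ℕ)) * T.K (fun i => (α i : ℤ))

end TaftPresentation

def tildeMap {n : ℕ} (β : Fin n → ℤ) : Fin n → ℤ := fun i =>
  if (i : ℕ) + 1 = n then ∑ j, β j
  else (∑ j : Fin n, if (j : ℕ) ≤ (i : ℕ) then β j else 0)
        - (∑ j : Fin n, if (i : ℕ) < (j : ℕ) then β j else 0)

variable {k : Type*} [Field k] {A : Type*} [Ring A] [HopfAlgebra k A]

/-- The functional `κ(α) ∈ 𝒜̄_q(n)*`, `κ(α)(x^γ K(β)) = δ_{γ,0} q^{⟨α,β⟩}`. -/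
noncomputable def kappaD {n ℓ : ℕ} {q t : k} (T : TaftPresentation k A n ℓ q t)
    (b : Module.Basis ((Fin n → Fin ℓ) × (Fin n → Fin ℓ)) k A) (α : Fin n → ℕ) :
    Module.Dual k A :=
  b.constr k (fun p =>
    if ∀ j, (p.1 j : ℕ) = 0 then q ^ (∑ i, α i * (p.2 i : ℕ)) else 0)

/-- The map `h ↦ s⁻¹(h₍₁₎) ⊗ χ(h₍₂₎) h₍₃₎`. -/
noncomputable def bulletAux (sInv : A →ₗ[k] A) (χ : Module.Dual k A) :
    A →ₗ[k] A ⊗[k] A :=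
  (TensorProduct.map sInv
      ((TensorProduct.lid k A).toLinearMap ∘ₗ TensorProduct.map χ LinearMap.id)) ∘ₗ
    (TensorProduct.map LinearMap.id (Coalgebra.comul (R := k))) ∘ₗ
      Coalgebra.comul (R := k)

/-- The bilinear collapse `(u ⊗ v) ↦ v * a * u`. -/
noncomputable def collapseMul (a : A) : A ⊗[k] A →ₗ[k] A :=
  TensorProduct.lift (LinearMap.mk₂ k (fun u v => v * a * u)
    (by intro m₁ m₂ n; simp [mul_add])
    (by intro c m n; simp [mul_smul_comm])
    (by intro m n₁ n₂; simp [add_mul])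
    (by intro c m n; simp [smul_mul_assoc]))

/-- The left Yetter–Drinfel'd action `h •_χ a = χ(h₍₂₎) h₍₃₎ a s⁻¹(h₍₁₎)`,
as a linear map in `h` for fixed `a`. -/
noncomputable def bulletAt (sInv : A →ₗ[k] A) (χ : Module.Dual k A) (a : A) :
    A →ₗ[k] A :=
  collapseMul a ∘ₗ bulletAux sInv χ

/-- The action `h ⊗ a ↦ h • a` as a linear map on the tensor square. -/
noncomputable def bulletT (sInv : A →ₗ[k] A) (χ : Module.Dual k A) :
    A ⊗[k] A →ₗ[k] A :=
  LinearMap.mul' k A ∘ₗ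
    TensorProduct.map LinearMap.id (LinearMap.mul' k A) ∘ₗ
      TensorProduct.map LinearMap.id (TensorProduct.comm k A A).toLinearMap ∘ₗ
        (TensorProduct.assoc k A A A).toLinearMap ∘ₗ
          TensorProduct.map (TensorProduct.comm k A A).toLinearMap LinearMap.id ∘ₗ
            TensorProduct.map (bulletAux sInv χ) LinearMap.id

/-- The braiding `R`-matrix `R_M(m ⊗ n) = n₍₀₎ ⊗ (n₍₁₎ • m)` of the simple
Yetter–Drinfel'd module, coming from the canonical `R`-matrix of the double. -/
noncomputable def RMat (sInv : A →ₗ[k] A) (χ : Module.Dual k A) :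
    A ⊗[k] A →ₗ[k] A ⊗[k] A :=
  TensorProduct.map LinearMap.id (bulletT sInv χ) ∘ₗ
    (TensorProduct.assoc k A A A).toLinearMap ∘ₗ
      TensorProduct.map (Coalgebra.comul (R := k)) LinearMap.id ∘ₗ
        (TensorProduct.comm k A A).toLinearMap


/-!
Both basis vectors have simple coproducts: `Δ K(m) = K(m) ⊗ K(m)` and
`Δ(x K(m)) = x K(m) ⊗ K(m) + K(m+1) ⊗ x K(m)`. So every entry of `R_M` is a sum of terms
`χ(h₂) h₃ a S⁻¹(h₁)` with `h₁, h₂, h₃ ∈ {K(m), K(m+1), x K(m)}`, and these are evaluated with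
`K(m) x = q^m x K(m)` and the values `χ(K(m)) = q^{(i-1)m}`, `χ(x K(m)) = 0` of `χ = κ((i-1)ε₁)`.

For `ℓ = 2m+1` and `i = m+1` put `c₁ = q^{(m+1)m}` and `c₂ = q^{(m+1)m+1}`; since `q^ℓ = 1` these
are the stated `q^{-1/4}` and `q^{3/4}`. The vectors `v₁ ⊗ v₁` and `v₂ ⊗ v₂` are
`c₁`-eigenvectors, and on the span of `v₁ ⊗ v₂` and `v₂ ⊗ v₁` the matrix has trace `c₁ - c₂` and
determinant `-c₁c₂`, so `(R - c₁)(R + c₂) = 0` by Cayley–Hamilton. The entry `q^{m²} ≠ 0` off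
the diagonal shows that `R` is not a scalar.
-/

open TensorProduct

namespace LinearMap

variable {M : Type*} [AddCommGroup M] [Module k M] {R : M →ₗ[k] M} {c d : k}

theorem quadratic_eq_zero_of_eq_smul {w : M} (h : R w = c • w) :
    R (R w) + (d - c) • R w - (c * d) • w = 0 := by
  rw [h, map_smul, h]
  module

theorem quadratic_eq_zero_of_block {u v : M} {β γ : k} (hu : R u = β • v + (c - d) • u)
    (hv : R v = γ • u) (hβγ : β * γ = c * d) :
    R (R u) + (d - c) • R u - (c * d) • u = 0 ∧ R (R v) + (d - c) • R v - (c * d) • v = 0 := by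
  constructor
  · rw [hu, map_add, map_smul, map_smul, hv, hu]
    linear_combination (norm := module) hβγ • u
  · rw [hv, map_smul, hu]
    linear_combination (norm := module) hβγ • v

end LinearMap

theorem Module.Basis.smul_tmul_swap_add_ne_smul {ι M : Type*} [AddCommGroup M] [Module k M]
    (b : Module.Basis ι k M) {i j : ι} (hij : i ≠ j) {s : k} (hs : s ≠ 0) (t c : k) :
    s • (b j ⊗ₜ[k] b i) + t • (b i ⊗ₜ[k] b j) ≠ c • (b i ⊗ₜ[k] b j) := by
  intro h
  have := congr((b.tensorProduct b).repr $h (j, i))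
  simp [← Module.Basis.tensorProduct_apply, hij, hij.symm] at this
  exact hs this

section InverseAntipode

def IsInverseOfAntipode (sInv : A →ₗ[k] A) : Prop :=
  ∀ a : A, sInv (HopfAlgebra.antipode (R := k) a) = a ∧ HopfAlgebra.antipode (R := k) (sInv a) = a

variable {sInv : A →ₗ[k] A} (hsInv : IsInverseOfAntipode sInv)
include hsInv

theorem inverseAntipode_eq_of_antipode_eq {a b : A}
    (h : HopfAlgebra.antipode (R := k) b = a) : sInv a = b := by
  rw [← h, (hsInv b).1]

theorem inverseAntipode_mul (a b : A) : sInv (a * b) = sInv b * sInv a := by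
  apply inverseAntipode_eq_of_antipode_eq hsInv
  rw [HopfAlgebra.antipode_mul_antidistrib, (hsInv a).2, (hsInv b).2]

end InverseAntipode

section Braiding

variable (sInv : A →ₗ[k] A) (χ : Module.Dual k A)

theorem bulletT_tmul_of_comul_eq {g : A} (hg : Coalgebra.comul (R := k) g = g ⊗ₜ g) (a : A) :
    bulletT sInv χ (g ⊗ₜ a) = χ g • (g * a * sInv g) := by
  simp [bulletT, bulletAux, hg, smul_tmul', mul_assoc]

theorem bulletT_tmul_of_comul_eq_add {y g h : A}
    (hy : Coalgebra.comul (R := k) y = y ⊗ₜ g + h ⊗ₜ y)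
    (hg : Coalgebra.comul (R := k) g = g ⊗ₜ g) (a : A) :
    bulletT sInv χ (y ⊗ₜ a) = χ g • (g * a * sInv y) + χ y • (g * a * sInv h)
      + χ h • (y * a * sInv h) := by
  simp [bulletT, bulletAux, hy, hg, smul_tmul', tmul_add, add_tmul, mul_assoc, add_assoc]

theorem RMat_tmul_of_comul_eq {g : A} (hg : Coalgebra.comul (R := k) g = g ⊗ₜ g) (a : A) :
    RMat sInv χ (a ⊗ₜ g) = g ⊗ₜ bulletT sInv χ (g ⊗ₜ a) := by
  simp [RMat, hg]

theorem RMat_tmul_of_comul_eq_add {y g h : A}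
    (hy : Coalgebra.comul (R := k) y = y ⊗ₜ g + h ⊗ₜ y) (a : A) :
    RMat sInv χ (a ⊗ₜ y) = y ⊗ₜ bulletT sInv χ (g ⊗ₜ a) + h ⊗ₜ bulletT sInv χ (y ⊗ₜ a) := by
  simp [RMat, hy, add_tmul]

end Braiding

theorem theta_fin_one (t : k) (α β : Fin 1 → ℤ) : theta t α β = 1 := by
  simp [theta, starForm]

theorem xpow_fin_one {R : Type*} [Ring R] (x : Fin 1 → R) (γ : Fin 1 → ℕ) :
    xpow x γ = x 0 ^ γ 0 := by
  simp [xpow, List.finRange_succ]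

theorem kappaD_mono {n ℓ : ℕ} {q t : k} (T : TaftPresentation k A n ℓ q t)
    {b : Module.Basis ((Fin n → Fin ℓ) × (Fin n → Fin ℓ)) k A} (hb : ∀ p, b p = T.mono p.1 p.2)
    (α : Fin n → ℕ) (γ β : Fin n → Fin ℓ) :
    kappaD T b α (T.mono γ β) = if ∀ j, (γ j : ℕ) = 0 then q ^ (∑ i, α i * (β i : ℕ)) else 0 := by
  rw [← hb (γ, β), kappaD, Module.Basis.constr_basis]

namespace TaftPresentation

variable {ℓ : ℕ} {q t : k} (T : TaftPresentation k A 1 ℓ q t)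

/-- `T.K₁ m` is `K(mε₁)`. -/
def K₁ (m : ℤ) : A := T.K fun _ => m

theorem K_fin_one (α : Fin 1 → ℤ) : T.K α = T.K₁ (α 0) := by
  rw [K₁]; congr; funext i; rw [Subsingleton.elim i 0]

theorem mono_fin_one (γ α : Fin 1 → Fin ℓ) :
    T.mono γ α = T.x 0 ^ (γ 0 : ℕ) * T.K₁ (α 0) := by
  rw [mono, xpow_fin_one, K_fin_one]

theorem K₁_mul_K₁ (m n : ℤ) : T.K₁ m * T.K₁ n = T.K₁ (m + n) := T.K_add _ _

theorem K₁_zero : T.K₁ 0 = 1 := T.K_zero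

theorem K₁_mul_K₁_neg (m : ℤ) : T.K₁ m * T.K₁ (-m) = 1 := by
  rw [K₁_mul_K₁, add_neg_cancel, K₁_zero]

theorem K₁_neg_mul_K₁ (m : ℤ) : T.K₁ (-m) * T.K₁ m = 1 := by
  rw [K₁_mul_K₁, neg_add_cancel, K₁_zero]

theorem K₁_natCast (m : ℕ) : T.K₁ m = T.K₁ 1 ^ m := by
  induction m with
  | zero => exact T.K₁_zero.trans (pow_zero _).symm
  | succ m ih => rw [pow_succ, ← ih, K₁_mul_K₁, Nat.cast_succ]

theorem K₁_one_pow_ell : T.K₁ 1 ^ ℓ = 1 := by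
  simpa [K_fin_one, epsZ] using T.K_ell 0

theorem K₁_natCast_mod (m : ℕ) : T.K₁ m = T.K₁ ↑(m % ℓ) := by
  rw [K₁_natCast, K₁_natCast, ← pow_eq_pow_mod m T.K₁_one_pow_ell]

theorem K₁_one_mul_x : T.K₁ 1 * T.x 0 = q • (T.x 0 * T.K₁ 1) := by
  simpa [K_fin_one, epsZ, theta_fin_one] using T.K_x 0 0

theorem K₁_natCast_mul_x (m : ℕ) : T.K₁ m * T.x 0 = q ^ m • (T.x 0 * T.K₁ m) := by
  induction m with
  | zero => simp [K₁_zero]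
  | succ m ih =>
    rw [Nat.cast_succ, ← K₁_mul_K₁, mul_assoc, K₁_one_mul_x, mul_smul_comm, ← mul_assoc, ih,
      smul_mul_assoc, smul_smul, mul_assoc, K₁_mul_K₁, pow_succ']

theorem K₁_mul_x (hq : q ≠ 0) (m : ℤ) : T.K₁ m * T.x 0 = q ^ m • (T.x 0 * T.K₁ m) := by
  obtain ⟨n, rfl | rfl⟩ := Int.eq_nat_or_neg m
  · simpa using T.K₁_natCast_mul_x n
  · have h := congr(T.K₁ (-n) * $(T.K₁_natCast_mul_x n) * T.K₁ (-n))
    rw [← mul_assoc, K₁_neg_mul_K₁, one_mul, mul_smul_comm, smul_mul_assoc, ← mul_assoc,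
      mul_assoc _ _ (T.K₁ (-n)), K₁_mul_K₁_neg, mul_one] at h
    rw [h, smul_smul, zpow_neg, zpow_natCast, inv_mul_cancel₀ (pow_ne_zero _ hq), one_smul]

theorem K₁_mul_x_mul (hq : q ≠ 0) (m : ℤ) (a : A) :
    T.K₁ m * (T.x 0 * a) = q ^ m • (T.x 0 * (T.K₁ m * a)) := by
  rw [← mul_assoc, K₁_mul_x T hq, smul_mul_assoc, mul_assoc]

theorem comul_K₁ (m : ℤ) : Coalgebra.comul (R := k) (T.K₁ m) = T.K₁ m ⊗ₜ T.K₁ m :=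
  T.comul_K _

theorem comul_x_mul_K₁ (m : ℤ) :
    Coalgebra.comul (R := k) (T.x 0 * T.K₁ m)
      = (T.x 0 * T.K₁ m) ⊗ₜ T.K₁ m + T.K₁ (m + 1) ⊗ₜ (T.x 0 * T.K₁ m) := by
  have hx : Coalgebra.comul (R := k) (T.x 0) = T.x 0 ⊗ₜ 1 + T.K₁ 1 ⊗ₜ T.x 0 := by
    simpa [K_fin_one, epsZ] using T.comul_x 0
  rw [Bialgebra.comul_mul, hx, comul_K₁, add_mul, Algebra.TensorProduct.tmul_mul_tmul,
    Algebra.TensorProduct.tmul_mul_tmul, one_mul, K₁_mul_K₁, add_comm 1 m]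

theorem antipode_K₁ (m : ℤ) : HopfAlgebra.antipode (R := k) (T.K₁ m) = T.K₁ (-m) :=
  T.antipode_K _

theorem K₁_eq_mono (hℓ : 0 < ℓ) (m : ℕ) :
    T.K₁ m = T.mono (fun _ => ⟨0, hℓ⟩) (fun _ => ⟨m % ℓ, Nat.mod_lt m hℓ⟩) := by
  rw [mono_fin_one, pow_zero, one_mul, K₁_natCast_mod]

theorem x_mul_K₁_eq_mono (hℓ : 1 < ℓ) (m : ℕ) :
    T.x 0 * T.K₁ m = T.mono (fun _ => ⟨1, hℓ⟩) (fun _ => ⟨m % ℓ, Nat.mod_lt m (by omega)⟩) := by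
  rw [mono_fin_one, pow_one, K₁_natCast_mod]

section Basis

variable {b : Module.Basis ((Fin 1 → Fin ℓ) × (Fin 1 → Fin ℓ)) k A}
  (hb : ∀ p, b p = T.mono p.1 p.2)
include hb

theorem exists_basis_eq_K₁_and_x_mul_K₁ (hℓ : 1 < ℓ) (m n : ℕ) :
    ∃ p p', p ≠ p' ∧ b p = T.K₁ m ∧ b p' = T.x 0 * T.K₁ n :=
  ⟨(fun _ => ⟨0, by omega⟩, fun _ => ⟨m % ℓ, Nat.mod_lt m (by omega)⟩),
    (fun _ => ⟨1, hℓ⟩, fun _ => ⟨n % ℓ, Nat.mod_lt n (by omega)⟩),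
    fun h => zero_ne_one congr((($h).1 0).val),
    (hb _).trans (T.K₁_eq_mono (by omega) m).symm, (hb _).trans (T.x_mul_K₁_eq_mono hℓ n).symm⟩

theorem kappaD_K₁ (hℓ : 0 < ℓ) (hqℓ : q ^ ℓ = 1) (c m : ℕ) :
    kappaD T b (fun _ => c) (T.K₁ m) = q ^ (c * m) := by
  rw [K₁_eq_mono T hℓ, kappaD_mono T hb, if_pos fun _ => rfl, Fin.sum_univ_one, pow_mul, pow_mul,
    pow_eq_pow_mod m (by rw [← pow_mul, mul_comm, pow_mul, hqℓ, one_pow])]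

theorem kappaD_x_mul_K₁ (hℓ : 1 < ℓ) (c m : ℕ) :
    kappaD T b (fun _ => c) (T.x 0 * T.K₁ m) = 0 := by
  rw [x_mul_K₁_eq_mono T hℓ, kappaD_mono T hb, if_neg fun h => one_ne_zero (h 0)]

end Basis

section Action

variable {sInv : A →ₗ[k] A} (χ : Module.Dual k A) (hsInv : IsInverseOfAntipode sInv) (hq : q ≠ 0)
include hsInv

theorem inverseAntipode_K₁ (m : ℤ) : sInv (T.K₁ m) = T.K₁ (-m) :=
  inverseAntipode_eq_of_antipode_eq hsInv (by rw [antipode_K₁, neg_neg])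

theorem inverseAntipode_x : sInv (T.x 0) = -(T.x 0 * T.K₁ (-1)) := by
  apply inverseAntipode_eq_of_antipode_eq hsInv
  have hx : HopfAlgebra.antipode (R := k) (T.x 0) = -(T.K₁ (-1) * T.x 0) := by
    simpa [K_fin_one, epsZ] using T.antipode_x 0
  rw [map_neg, HopfAlgebra.antipode_mul_antidistrib, hx, antipode_K₁, neg_neg, mul_neg, neg_neg,
    ← mul_assoc, K₁_mul_K₁_neg, one_mul]

theorem bulletT_K₁_tmul_K₁ (m n : ℤ) :
    bulletT sInv χ (T.K₁ m ⊗ₜ T.K₁ n) = χ (T.K₁ m) • T.K₁ n := by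
  rw [bulletT_tmul_of_comul_eq _ _ (T.comul_K₁ m), T.inverseAntipode_K₁ hsInv, K₁_mul_K₁,
    K₁_mul_K₁, add_neg_cancel_comm]

include hq

theorem inverseAntipode_x_mul_K₁ (m : ℤ) :
    sInv (T.x 0 * T.K₁ m) = -(q ^ (-m) • (T.x 0 * T.K₁ (-m - 1))) := by
  rw [inverseAntipode_mul hsInv, T.inverseAntipode_K₁ hsInv, T.inverseAntipode_x hsInv, mul_neg,
    ← mul_assoc, K₁_mul_x T hq, smul_mul_assoc, mul_assoc, K₁_mul_K₁, sub_eq_add_neg]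

theorem bulletT_K₁_tmul_x_mul_K₁ (m n : ℤ) :
    bulletT sInv χ (T.K₁ m ⊗ₜ (T.x 0 * T.K₁ n)) = (χ (T.K₁ m) * q ^ m) • (T.x 0 * T.K₁ n) := by
  rw [bulletT_tmul_of_comul_eq _ _ (T.comul_K₁ m), T.inverseAntipode_K₁ hsInv, ← mul_assoc,
    K₁_mul_x T hq, smul_mul_assoc, smul_mul_assoc, mul_assoc, mul_assoc, K₁_mul_K₁, K₁_mul_K₁,
    show m + (n + -m) = n by ring, smul_smul]

theorem bulletT_x_mul_K₁_tmul_K₁ {m : ℤ} (hχ : χ (T.x 0 * T.K₁ m) = 0) (n : ℤ) :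
    bulletT sInv χ ((T.x 0 * T.K₁ m) ⊗ₜ T.K₁ n)
      = (χ (T.K₁ (m + 1)) - χ (T.K₁ m) * q ^ n) • (T.x 0 * T.K₁ (n - 1)) := by
  rw [bulletT_tmul_of_comul_eq_add _ _ (T.comul_x_mul_K₁ m) (T.comul_K₁ m),
    T.inverseAntipode_x_mul_K₁ hsInv hq, T.inverseAntipode_K₁ hsInv, hχ, zero_smul, add_zero]
  simp only [mul_assoc, mul_neg, smul_neg, mul_smul_comm, K₁_mul_K₁, K₁_mul_x_mul T hq, smul_smul]
  rw [← zpow_add₀ hq, neg_add_cancel_left, show m + n + (-m - 1) = n - 1 by ring,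
    show m + n + -(m + 1) = n - 1 by ring]
  module

theorem bulletT_x_mul_K₁_tmul_x_mul_K₁ {m : ℤ} (hχ : χ (T.x 0 * T.K₁ m) = 0) (n : ℤ) :
    bulletT sInv χ ((T.x 0 * T.K₁ m) ⊗ₜ (T.x 0 * T.K₁ n))
      = (χ (T.K₁ (m + 1)) * q ^ m - χ (T.K₁ m) * q ^ (m + n)) •
          (T.x 0 * (T.x 0 * T.K₁ (n - 1))) := by
  rw [bulletT_tmul_of_comul_eq_add _ _ (T.comul_x_mul_K₁ m) (T.comul_K₁ m),
    T.inverseAntipode_x_mul_K₁ hsInv hq, T.inverseAntipode_K₁ hsInv, hχ, zero_smul, add_zero]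
  simp only [mul_assoc, mul_neg, smul_neg, mul_smul_comm, smul_mul_assoc, K₁_mul_K₁,
    K₁_mul_x_mul T hq, smul_smul]
  rw [← zpow_add₀ hq, ← zpow_add₀ hq, show -m + (m + (m + n)) = m + n by ring,
    show m + n + (-m - 1) = n - 1 by ring, show m + n + -(m + 1) = n - 1 by ring]
  module

end Action

theorem RMat_tmul_K₁ (sInv : A →ₗ[k] A) (χ : Module.Dual k A) (a : A) (m : ℤ) :
    RMat sInv χ (a ⊗ₜ T.K₁ m) = T.K₁ m ⊗ₜ bulletT sInv χ (T.K₁ m ⊗ₜ a) :=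
  RMat_tmul_of_comul_eq sInv χ (T.comul_K₁ m) a

theorem RMat_tmul_x_mul_K₁ (sInv : A →ₗ[k] A) (χ : Module.Dual k A) (a : A) (m : ℤ) :
    RMat sInv χ (a ⊗ₜ (T.x 0 * T.K₁ m)) = (T.x 0 * T.K₁ m) ⊗ₜ bulletT sInv χ (T.K₁ m ⊗ₜ a)
      + T.K₁ (m + 1) ⊗ₜ bulletT sInv χ ((T.x 0 * T.K₁ m) ⊗ₜ a) :=
  RMat_tmul_of_comul_eq_add sInv χ (T.comul_x_mul_K₁ m) a

theorem RMat_simpleModule {sInv : A →ₗ[k] A} (hsInv : IsInverseOfAntipode sInv) (hq : q ≠ 0)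
    {χ : Module.Dual k A} {j : ℕ} (hχK : ∀ m : ℕ, χ (T.K₁ m) = q ^ (j * m))
    (hχx : χ (T.x 0 * T.K₁ j) = 0) :
    let R := RMat sInv χ
    let v₁ := T.K₁ (j + 1)
    let v₂ := T.x 0 * T.K₁ j
    R (v₁ ⊗ₜ v₁) = q ^ ((j + 1) * j) • (v₁ ⊗ₜ v₁) ∧
    R (v₁ ⊗ₜ v₂) = q ^ (j * j) • (v₂ ⊗ₜ v₁)
      + (q ^ ((j + 1) * j) - q ^ ((j + 1) * j + 1)) • (v₁ ⊗ₜ v₂) ∧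
    R (v₂ ⊗ₜ v₁) = q ^ ((j + 1) * (j + 1)) • (v₁ ⊗ₜ v₂) ∧
    R (v₂ ⊗ₜ v₂) = q ^ ((j + 1) * j) • (v₂ ⊗ₜ v₂) := by
  have hχK' : χ (T.K₁ (j + 1)) = q ^ ((j + 1) * j) := by
    rw [mul_comm]; exact_mod_cast hχK (j + 1)
  have hq' : q ^ ((j : ℤ) + 1) = q ^ (j + 1) := by norm_cast
  refine ⟨?_, ?_, ?_, ?_⟩
  · rw [RMat_tmul_K₁, T.bulletT_K₁_tmul_K₁ χ hsInv, hχK', tmul_smul]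
  · rw [RMat_tmul_x_mul_K₁, T.bulletT_K₁_tmul_K₁ χ hsInv,
      T.bulletT_x_mul_K₁_tmul_K₁ χ hsInv hq hχx, hχK', hχK, hq', add_sub_cancel_right, tmul_smul,
      tmul_smul, ← pow_add]
    ring_nf
  · rw [RMat_tmul_K₁, T.bulletT_K₁_tmul_x_mul_K₁ χ hsInv hq, hχK', hq', ← pow_add, tmul_smul]
    ring_nf
  · rw [RMat_tmul_x_mul_K₁, T.bulletT_K₁_tmul_x_mul_K₁ χ hsInv hq,
      T.bulletT_x_mul_K₁_tmul_x_mul_K₁ χ hsInv hq hχx, hχK, hχK', ← Nat.cast_add, zpow_natCast,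
      zpow_natCast, show q ^ ((j + 1) * j) * q ^ j - q ^ (j * j) * q ^ (j + j) = 0 by ring,
      zero_smul, tmul_zero, add_zero, tmul_smul, ← pow_add]
    ring_nf

end TaftPresentation

theorem pow_three_mul_succ_mul_succ_div_four {q : k} {ℓ m : ℕ} (hqℓ : q ^ ℓ = 1)
    (hm : ℓ = 2 * m + 1) : q ^ (3 * (ℓ + 1) * (ℓ + 1) / 4) = q ^ ((m + 1) * m + 1) := by
  rw [Nat.div_eq_of_eq_mul_left (by norm_num) (show 3 * (ℓ + 1) * (ℓ + 1) =
    ((m + 1) * m + 1 + ℓ * (m + 2)) * 4 by rw [hm]; ring), pow_add, pow_mul, hqℓ, one_pow, mul_one]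

theorem stmt17_general {ℓ : ℕ} {q : k}
    (hq : IsPrimitiveRoot q ℓ) (hℓ : 1 < ℓ)
    (T : TaftPresentation k A 1 ℓ q q)
    (b : Module.Basis ((Fin 1 → Fin ℓ) × (Fin 1 → Fin ℓ)) k A)
    (hb : ∀ p, b p = T.mono p.1 p.2)
    (sInv : A →ₗ[k] A)
    (hsInv : ∀ a : A, sInv (HopfAlgebra.antipode (R := k) a) = a ∧
        HopfAlgebra.antipode (R := k) (sInv a) = a) :
    (∀ i : ℕ, 1 ≤ i → i ≤ ℓ →
      letI χ : Module.Dual k A := kappaD T b (fun _ => i - 1)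
      letI R := RMat sInv χ
      letI v1 : A := T.K (fun _ => (i : ℤ))
      letI v2 : A := T.x 0 * T.K (fun _ => (i : ℤ) - 1)
      R (v1 ⊗ₜ[k] v1) = q ^ (i * (i - 1)) • (v1 ⊗ₜ[k] v1) ∧
      R (v1 ⊗ₜ[k] v2) = q ^ ((i - 1) * (i - 1)) • (v2 ⊗ₜ[k] v1)
          + (q ^ (i * (i - 1)) - q ^ (i * (i - 1) + 1)) • (v1 ⊗ₜ[k] v2) ∧
      R (v2 ⊗ₜ[k] v1) = q ^ (i * i) • (v1 ⊗ₜ[k] v2) ∧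
      R (v2 ⊗ₜ[k] v2) = q ^ (i * (i - 1)) • (v2 ⊗ₜ[k] v2)) ∧
    (Odd ℓ →
      letI i := (ℓ + 1) / 2
      letI χ : Module.Dual k A := kappaD T b (fun _ => i - 1)
      letI R := RMat sInv χ
      letI v1 : A := T.K (fun _ => (i : ℤ))
      letI v2 : A := T.x 0 * T.K (fun _ => (i : ℤ) - 1)
      letI c1 : k := q ^ ((ℓ * ℓ - 1) / 4)           -- `q^{-1/4}`
      letI c2 : k := q ^ ((3 * (ℓ + 1) * (ℓ + 1)) / 4) -- `q^{3/4}`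
      (∀ w ∈ ({v1, v2} : Set A), ∀ w' ∈ ({v1, v2} : Set A),
        R (R (w ⊗ₜ[k] w')) + (c2 - c1) • R (w ⊗ₜ[k] w')
          - (c1 * c2) • (w ⊗ₜ[k] w') = 0) ∧
      ¬(∀ w ∈ ({v1, v2} : Set A), ∀ w' ∈ ({v1, v2} : Set A),
          R (w ⊗ₜ[k] w') = c1 • (w ⊗ₜ[k] w')) ∧
      ¬(∀ w ∈ ({v1, v2} : Set A), ∀ w' ∈ ({v1, v2} : Set A),
          R (w ⊗ₜ[k] w') = -c2 • (w ⊗ₜ[k] w'))) := by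
  have hqℓ : q ^ ℓ = 1 := hq.pow_eq_one
  have hq0 : q ≠ 0 := hq.ne_zero (by omega)
  have matrix (j : ℕ) := T.RMat_simpleModule hsInv hq0 (j := j)
    (T.kappaD_K₁ hb (by omega) hqℓ j) (T.kappaD_x_mul_K₁ hb hℓ j j)
  refine ⟨fun i hi _ => ?_, fun ⟨m, hm⟩ => ?_⟩
  · obtain ⟨j, rfl⟩ := Nat.exists_eq_add_of_le' hi
    simpa [TaftPresentation.K_fin_one] using matrix j
  · obtain ⟨h₁₁, h₁₂, h₂₁, h₂₂⟩ := matrix m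
    have hblock := LinearMap.quadratic_eq_zero_of_block h₁₂ h₂₁
      (by rw [← pow_add, ← pow_add]; ring_nf)
    have hR : ∀ c : k, RMat sInv (kappaD T b fun _ => m) (T.K₁ (m + 1) ⊗ₜ (T.x 0 * T.K₁ m))
        ≠ c • (T.K₁ (m + 1) ⊗ₜ (T.x 0 * T.K₁ m)) := by
      obtain ⟨p₁, p₂, hne, hp₁, hp₂⟩ := T.exists_basis_eq_K₁_and_x_mul_K₁ hb hℓ (m + 1) m
      push_cast at hp₁
      rw [h₁₂, ← hp₁, ← hp₂]
      exact b.smul_tmul_swap_add_ne_smul hne (pow_ne_zero _ hq0) _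
    have hc₁ : (ℓ * ℓ - 1) / 4 = (m + 1) * m :=
      Nat.div_eq_of_eq_mul_left (by norm_num) (Nat.sub_eq_of_eq_add (by rw [hm]; ring))
    simp only [show (ℓ + 1) / 2 = m + 1 by omega, hc₁, pow_three_mul_succ_mul_succ_div_four hqℓ hm,
      Nat.add_sub_cancel, Nat.cast_add, Nat.cast_one, add_sub_cancel_right,
      TaftPresentation.K_fin_one]
    refine ⟨?_, fun h => hR _ (h _ (by simp) _ (by simp)),
      fun h => hR _ (h _ (by simp) _ (by simp))⟩
    rintro w (rfl | rfl) w' (rfl | rfl)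
    exacts [LinearMap.quadratic_eq_zero_of_eq_smul h₁₁, hblock.1, hblock.2,
      LinearMap.quadratic_eq_zero_of_eq_smul h₂₂]

/-- for the Taft algebra (`n = 1`) and its two-dimensional simple
`D(T_ℓ)`-module `𝒜̄_{(i-1)ε₁, iε₁}` with basis `{K(iε₁), x₁K((i-1)ε₁)}`, the
braiding `R`-matrix is the stated `4×4` matrix; for `ℓ` odd and `i = (ℓ+1)/2`
its minimal polynomial is `(X - q^{-1/4})(X + q^{3/4})`, `q^{1/4} := q^{(ℓ+1)²/4}`. -/
theorem stmt17 [CharZero k] [IsAlgClosed k] {ℓ : ℕ} {q : k}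
    (hq : IsPrimitiveRoot q ℓ) (hℓ : 1 < ℓ)
    (T : TaftPresentation k A 1 ℓ q q)
    (b : Module.Basis ((Fin 1 → Fin ℓ) × (Fin 1 → Fin ℓ)) k A)
    (hb : ∀ p, b p = T.mono p.1 p.2)
    (sInv : A →ₗ[k] A)
    (hsInv : ∀ a : A, sInv (HopfAlgebra.antipode (R := k) a) = a ∧
        HopfAlgebra.antipode (R := k) (sInv a) = a) :
    (∀ i : ℕ, 1 ≤ i → i ≤ ℓ →
      letI χ : Module.Dual k A := kappaD T b (fun _ => i - 1)
      letI R := RMat sInv χ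
      letI v1 : A := T.K (fun _ => (i : ℤ))
      letI v2 : A := T.x 0 * T.K (fun _ => (i : ℤ) - 1)
      R (v1 ⊗ₜ[k] v1) = q ^ (i * (i - 1)) • (v1 ⊗ₜ[k] v1) ∧
      R (v1 ⊗ₜ[k] v2) = q ^ ((i - 1) * (i - 1)) • (v2 ⊗ₜ[k] v1)
          + (q ^ (i * (i - 1)) - q ^ (i * (i - 1) + 1)) • (v1 ⊗ₜ[k] v2) ∧
      R (v2 ⊗ₜ[k] v1) = q ^ (i * i) • (v1 ⊗ₜ[k] v2) ∧
      R (v2 ⊗ₜ[k] v2) = q ^ (i * (i - 1)) • (v2 ⊗ₜ[k] v2)) ∧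
    (Odd ℓ →
      letI i := (ℓ + 1) / 2
      letI χ : Module.Dual k A := kappaD T b (fun _ => i - 1)
      letI R := RMat sInv χ
      letI v1 : A := T.K (fun _ => (i : ℤ))
      letI v2 : A := T.x 0 * T.K (fun _ => (i : ℤ) - 1)
      letI c1 : k := q ^ ((ℓ * ℓ - 1) / 4)           -- `q^{-1/4}`
      letI c2 : k := q ^ ((3 * (ℓ + 1) * (ℓ + 1)) / 4) -- `q^{3/4}`
      (∀ w ∈ ({v1, v2} : Set A), ∀ w' ∈ ({v1, v2} : Set A),
        R (R (w ⊗ₜ[k] w')) + (c2 - c1) • R (w ⊗ₜ[k] w')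
          - (c1 * c2) • (w ⊗ₜ[k] w') = 0) ∧
      ¬(∀ w ∈ ({v1, v2} : Set A), ∀ w' ∈ ({v1, v2} : Set A),
          R (w ⊗ₜ[k] w') = c1 • (w ⊗ₜ[k] w')) ∧
      ¬(∀ w ∈ ({v1, v2} : Set A), ∀ w' ∈ ({v1, v2} : Set A),
          R (w ⊗ₜ[k] w') = -c2 • (w ⊗ₜ[k] w'))) :=
  stmt17_general hq hℓ T b hb sInv hsInv
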